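/- Let P be a Young diagram of order n and Q ⊆ P. For each i ∈ {1,...,n}, let the bridge length b_i be the number of columns j with #^j Q = i−1 and #^j P = i. Then P/Q admits a semistandard {1,2}-filling (rows weakly increasing, columns strictly increasing) that is balanced (equal number of 1's and 2's) and α_1-codominant (for every j, among the first j columns the number of 2's is at least the number of 1's) if and only if: (i) #P − #Q is even; (ii) P/Q has thickness at most 2; and (iii) for every i, b_i ≤ (1/2)∑_{j=1}^n b_j. -/

import Mathlib

/-!
Thickness at most two forces every column of two boxes to read `1, 2`, so only the columns of one
box matter. Reading their entries from left to right gives a `{1, 2}`-word, and the filling is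
balanced and `α₁`-codominant exactly when this word is a ballot sequence; semistandardness says
that each bridge, a run of one-box columns of equal height lying in a single row, reads
`1 … 1 2 … 2`. A bridge cannot hold more than half of the word: its `1`s are outvoted by `2`s to
their left and its `2`s by `1`s to their right, all outside the bridge. Conversely, order the
one-box columns by height and then by position and put the `2`s on the upper half of this order.
If no bridge holds more than half, the `i`-th element of the lower half and the `i`-th element of
the upper half have different heights, so each `1` is matched with a `2` further left.
-/

/-- A Young diagram of order `n`, given by its (weakly decreasing) row lengths,
vanishing from row `n` on. Rows are indexed from `0`. -/
def IsYoung (n : ℕ) (P : ℕ → ℕ) : Prop :=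
  (∀ i, P (i + 1) ≤ P i) ∧ ∀ i, n ≤ i → P i = 0

/-- The total number of boxes of a Young diagram of order `n`. -/
def ysize (n : ℕ) (P : ℕ → ℕ) : ℕ := ∑ i ∈ Finset.range n, P i

/-- The height of the `j`-th column (columns indexed from `0`). -/
def colH (n : ℕ) (P : ℕ → ℕ) (j : ℕ) : ℕ :=
  ((Finset.range n).filter (fun i => j < P i)).card

/-- The number of boxes of the skew diagram `P/Q`. -/
def skewSize (n : ℕ) (P Q : ℕ → ℕ) : ℕ := ∑ i ∈ Finset.range n, (P i - Q i)

/-- The skew diagram `P/Q` has thickness at most `m`: every column has at most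
`m` boxes. -/
def ThickLE (n : ℕ) (P Q : ℕ → ℕ) (m : ℕ) : Prop :=
  ∀ j, colH n P j ≤ colH n Q j + m

/-- `T` is a semistandard filling of the skew diagram `P/Q`: rows weakly increase
from left to right, columns strictly increase from top to bottom.
`T i j` is the entry in row `i`, column `j`. -/
def SkewSemistd (P Q : ℕ → ℕ) (T : ℕ → ℕ → ℕ) : Prop :=
  (∀ i j, Q i ≤ j → j + 1 < P i → T i j ≤ T i (j + 1)) ∧
  (∀ i j, Q i ≤ j → j < P (i + 1) → T i j < T (i + 1) j)

/-- All entries of the filling `T` of `P/Q` belong to the alphabet `{lo, …, hi}`. -/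
def InAlpha (P Q : ℕ → ℕ) (T : ℕ → ℕ → ℕ) (lo hi : ℕ) : Prop :=
  ∀ i j, Q i ≤ j → j < P i → lo ≤ T i j ∧ T i j ≤ hi

/-- The number of occurrences of the symbol `s` among the first `j` columns of the
filling `T` of `P/Q`. -/
def cntCols (n : ℕ) (P Q : ℕ → ℕ) (T : ℕ → ℕ → ℕ) (s : ℕ) (j : ℕ) : ℕ :=
  ∑ i ∈ Finset.range n, ((Finset.Ico (Q i) (min j (P i))).filter (fun c => T i c = s)).card

/-- The total number of occurrences of the symbol `s` in the filling `T` of `P/Q`. -/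
def cntAll (n : ℕ) (P Q : ℕ → ℕ) (T : ℕ → ℕ → ℕ) (s : ℕ) : ℕ :=
  ∑ i ∈ Finset.range n, ((Finset.Ico (Q i) (P i)).filter (fun c => T i c = s)).card

/-- The filling `T` of `P/Q` is balanced with respect to the alphabet `{lo, …, hi}`:
each symbol occurs exactly `(#P/Q)/(hi+1-lo)` times. -/
def BalancedF (n : ℕ) (P Q : ℕ → ℕ) (T : ℕ → ℕ → ℕ) (lo hi : ℕ) : Prop :=
  ∀ s, lo ≤ s → s ≤ hi → (hi + 1 - lo) * cntAll n P Q T s = skewSize n P Q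

/-- The filling `T` of `P/Q` is `α_i`-codominant: among the first `j` columns there
are at least as many occurrences of `i+1` as of `i`, for every `j`. -/
def Codom (n : ℕ) (P Q : ℕ → ℕ) (T : ℕ → ℕ → ℕ) (i : ℕ) : Prop :=
  ∀ j, cntCols n P Q T i j ≤ cntCols n P Q T (i + 1) j

/-- The length of the bridge at height `i` (for `1 ≤ i ≤ n`) of the skew diagram
`P/Q`: the number of columns whose height in `Q` is `i-1` and in `P` is `i`. -/
def bridge (n : ℕ) (P Q : ℕ → ℕ) (i : ℕ) : ℕ :=
  ((Finset.range (P 0)).filter (fun j => colH n Q j = i - 1 ∧ colH n P j = i)).card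

open Finset

section UpperHalf

variable {α β : Type*} [LinearOrder α] [LinearOrder β]

def upperHalf (s : Finset α) : Finset α :=
  s.filter fun x => #(s.filter (x < ·)) < #s / 2

lemma upperHalf_subset (s : Finset α) : upperHalf s ⊆ s := filter_subset _ _

lemma mem_upperHalf_of_le {s : Finset α} {x y : α} (hx : x ∈ upperHalf s) (hy : y ∈ s)
    (hxy : x ≤ y) : y ∈ upperHalf s := by
  simp only [upperHalf, mem_filter] at hx ⊢
  exact ⟨hy, (card_le_card (monotone_filter_right _ fun _ _ hz => hxy.trans_lt hz)).trans_lt hx.2⟩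

lemma card_filter_orderEmbOfFin_lt (s : Finset α) {N : ℕ} (hs : #s = N) (k : Fin N) :
    #(s.filter (s.orderEmbOfFin hs k < ·)) = N - 1 - k := by
  have : s.filter (s.orderEmbOfFin hs k < ·) = (Ioi k).map (s.orderEmbOfFin hs).toEmbedding := by
    ext x
    simp only [mem_filter, mem_map, mem_Ioi, RelEmbedding.coe_toEmbedding]
    constructor
    · rintro ⟨hx, hkx⟩
      obtain ⟨a, rfl⟩ : x ∈ Set.range (s.orderEmbOfFin hs) := by simpa using hx
      exact ⟨a, (s.orderEmbOfFin hs).lt_iff_lt.1 hkx, rfl⟩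
    · rintro ⟨a, hka, rfl⟩
      exact ⟨orderEmbOfFin_mem s hs a, (s.orderEmbOfFin hs).lt_iff_lt.2 hka⟩
  rw [this, card_map, Fin.card_Ioi]

variable {s : Finset α} {m : ℕ}

lemma orderEmbOfFin_mem_upperHalf_iff (hs : #s = m + m) (k : Fin (m + m)) :
    s.orderEmbOfFin hs k ∈ upperHalf s ↔ m ≤ k := by
  simp only [upperHalf, mem_filter, orderEmbOfFin_mem, true_and, card_filter_orderEmbOfFin_lt, hs]
  omega

lemma upperHalf_eq_image (hs : #s = m + m) :
    upperHalf s = univ.image (s.orderEmbOfFin hs ∘ Fin.natAdd m) := by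
  ext x
  refine ⟨fun hx => ?_, ?_⟩
  · obtain ⟨k, rfl⟩ : x ∈ Set.range (s.orderEmbOfFin hs) := by simpa using upperHalf_subset s hx
    rw [orderEmbOfFin_mem_upperHalf_iff] at hx
    refine mem_image.2 ⟨⟨k - m, by omega⟩, mem_univ _, ?_⟩
    rw [Function.comp_apply]
    exact congrArg _ (Fin.ext (by simp only [Fin.natAdd]; omega))
  · simp only [mem_image, mem_univ, true_and]
    rintro ⟨i, rfl⟩
    simp [orderEmbOfFin_mem_upperHalf_iff]

lemma sdiff_upperHalf_eq_image (hs : #s = m + m) :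
    s \ upperHalf s = univ.image (s.orderEmbOfFin hs ∘ Fin.castAdd m) := by
  ext x
  refine ⟨fun hx => ?_, ?_⟩
  · obtain ⟨hxs, hxu⟩ := mem_sdiff.1 hx
    obtain ⟨k, rfl⟩ : x ∈ Set.range (s.orderEmbOfFin hs) := by simpa using hxs
    rw [orderEmbOfFin_mem_upperHalf_iff, not_le] at hxu
    exact mem_image.2 ⟨⟨k, hxu⟩, mem_univ _, rfl⟩
  · simp only [mem_image, mem_univ, true_and]
    rintro ⟨i, rfl⟩
    simp [orderEmbOfFin_mem_upperHalf_iff]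

lemma card_upperHalf (hs : #s = m + m) : #(upperHalf s) = m := by
  rw [upperHalf_eq_image hs, card_image_of_injective _
    ((s.orderEmbOfFin hs).injective.comp (Fin.natAdd_injective m m)), card_univ, Fintype.card_fin]

lemma card_sdiff_upperHalf (hs : #s = m + m) : #(s \ upperHalf s) = m := by
  rw [card_sdiff_of_subset (upperHalf_subset s), card_upperHalf hs, hs, Nat.add_sub_cancel]

/-- Otherwise the `m + 1` elements between these two would all lie in a single fibre. -/
lemma apply_orderEmbOfFin_castAdd_lt_natAdd {g : α → β} (hg : Monotone g) (hs : #s = m + m)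
    (hfib : ∀ x ∈ s, #(s.filter (g · = g x)) ≤ m) (i : Fin m) :
    g (s.orderEmbOfFin hs (Fin.castAdd m i)) < g (s.orderEmbOfFin hs (Fin.natAdd m i)) := by
  set f := s.orderEmbOfFin hs
  refine (hg (f.monotone ?_)).lt_of_ne fun heq => ?_
  · simp [Fin.le_def]
  let φ : Fin (m + 1) → α := fun t => f ⟨i + t, by omega⟩
  have hφ : ∀ t ∈ (univ : Finset (Fin (m + 1))),
      φ t ∈ s.filter (g · = g (f (Fin.castAdd m i))) := by
    intro t _
    refine mem_filter.2 ⟨orderEmbOfFin_mem s hs _, le_antisymm ?_ (hg (f.monotone ?_))⟩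
    · exact heq ▸ hg (f.monotone (by simp [Fin.le_def]; omega))
    · simp [Fin.le_def]
  have := card_le_card_of_injOn φ hφ fun a _ b _ hab => by
    simpa [φ, Fin.ext_iff] using f.injective hab
  simp only [card_univ, Fintype.card_fin] at this
  have := hfib (f (Fin.castAdd m i)) (orderEmbOfFin_mem s hs _)
  omega

lemma card_filter_sdiff_upperHalf_le {g : α → β} (hg : Monotone g) (hs : #s = m + m)
    (hfib : ∀ x ∈ s, #(s.filter (g · = g x)) ≤ m) (p : α → Prop) [DecidablePred p]
    (hp : ∀ x ∈ s, ∀ y ∈ s, g x < g y → p x → p y) :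
    #((s \ upperHalf s).filter p) ≤ #((upperHalf s).filter p) := by
  set f := s.orderEmbOfFin hs
  rw [sdiff_upperHalf_eq_image hs, upperHalf_eq_image hs, filter_image, filter_image,
    card_image_of_injective _ (f.injective.comp (Fin.castAdd_injective m m)),
    card_image_of_injective _ (f.injective.comp (Fin.natAdd_injective m m))]
  exact card_le_card <| monotone_filter_right _ fun i _ =>
    hp _ (orderEmbOfFin_mem s hs _) _ (orderEmbOfFin_mem s hs _)
      (apply_orderEmbOfFin_castAdd_lt_natAdd hg hs hfib i)

end UpperHalf

section Ballot

/-- `t ⊆ s` is the set of positions of the `2`s in a `{1, 2}`-word indexed by `s`. -/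
def IsBallot (s t : Finset ℕ) : Prop :=
  #(s \ t) = #t ∧ ∀ j, #((s \ t).filter (· < j)) ≤ #(t.filter (· < j))

variable {s t : Finset ℕ}

lemma IsBallot.even_card (hst : IsBallot s t) (hts : t ⊆ s) : Even #s :=
  ⟨#t, by rw [← card_sdiff_add_card_eq_card hts, hst.1]⟩

theorem IsBallot.two_mul_card_le {b : Finset ℕ} (hst : IsBallot s t) (hts : t ⊆ s)
    (hbs : b ⊆ s) (hb : ∀ x ∈ b, ∀ y ∈ b, x ≤ y → x ∈ t → y ∈ t) : 2 * #b ≤ #s := by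
  -- `b` reads `1 … 1 2 … 2`, with the last `1` just before position `j`
  set j := (b \ t).sup (· + 1)
  have hlt : ∀ x ∈ b \ t, x < j := fun x hx => le_sup (f := (· + 1)) hx
  have hge : ∀ y ∈ b ∩ t, j ≤ y := by
    intro y hy
    by_contra! hyj
    obtain ⟨x, hx, hyx⟩ := Finset.lt_sup_iff.1 hyj
    exact (mem_sdiff.1 hx).2 (hb y (mem_inter.1 hy).1 x (mem_sdiff.1 hx).1 (by omega)
      (mem_inter.1 hy).2)
  have hbefore : #(b \ t) ≤ #(t.filter (· < j)) :=
    (card_le_card fun x hx => mem_filter.2 ⟨sdiff_subset_sdiff hbs le_rfl hx, hlt x hx⟩).trans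
      (hst.2 j)
  have hafter : #(b ∩ t) ≤ #((s \ t).filter (¬ · < j)) := by
    have h1 := card_filter_add_card_filter_not (s := s \ t) (· < j)
    have h2 := card_filter_add_card_filter_not (s := t) (· < j)
    have h3 : #(b ∩ t) ≤ #(t.filter (¬ · < j)) :=
      card_le_card fun y hy => mem_filter.2 ⟨(mem_inter.1 hy).2, not_lt.2 (hge y hy)⟩
    have := hst.1
    have := hst.2 j
    omega
  have houtside : t.filter (· < j) ∪ (s \ t).filter (¬ · < j) ⊆ s \ b := by
    intro x hx
    rcases mem_union.1 hx with hx | hx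
    · obtain ⟨hxt, hxj⟩ := mem_filter.1 hx
      exact mem_sdiff.2 ⟨hts hxt, fun hxb => not_le.2 hxj (hge x (mem_inter.2 ⟨hxb, hxt⟩))⟩
    · obtain ⟨hxst, hxj⟩ := mem_filter.1 hx
      exact mem_sdiff.2 ⟨(mem_sdiff.1 hxst).1, fun hxb =>
        hxj (hlt x (mem_sdiff.2 ⟨hxb, (mem_sdiff.1 hxst).2⟩))⟩
  have hdisj : Disjoint (t.filter (· < j)) ((s \ t).filter (¬ · < j)) :=
    disjoint_left.2 fun _ hx hx' => (mem_filter.1 hx').2 (mem_filter.1 hx).2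
  have := card_le_card houtside
  rw [card_union_of_disjoint hdisj] at this
  have := card_sdiff_add_card_inter b t
  have := card_sdiff_add_card_eq_card hbs
  omega

theorem exists_isBallot {h : ℕ → ℕ} (hh : Antitone h) (hs : Even #s)
    (hfib : ∀ x ∈ s, 2 * #(s.filter (h · = h x)) ≤ #s) :
    ∃ t ⊆ s, IsBallot s t ∧ ∀ x ∈ s, ∀ y ∈ s, h x = h y → x ≤ y → x ∈ t → y ∈ t := by
  obtain ⟨m, hm⟩ := hs
  let κ : ℕ ↪ ℕ ×ₗ ℕ := ⟨fun c => toLex (h c, c), fun a b hab => congrArg (·.2) hab⟩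
  have hκ : #(s.map κ) = m + m := by rw [card_map, hm]
  set U := upperHalf (s.map κ)
  set t := s.filter (κ · ∈ U)
  have hU : t.map κ = U := by
    change (s.filter ((· ∈ U) ∘ κ)).map κ = U
    rw [← filter_map, filter_mem_eq_inter, inter_eq_right.2 (upperHalf_subset _)]
  have hsU : (s \ t).map κ = s.map κ \ U := by rw [Finset.map_sdiff, hU]
  have hprefix : ∀ (u : Finset ℕ) (j : ℕ),
      #(u.filter (· < j)) = #((u.map κ).filter fun x => (ofLex x).2 < j) := by
    intro u j
    rw [filter_map, card_map]
    rfl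
  refine ⟨t, filter_subset _ _, ⟨?_, fun j => ?_⟩, fun x hx y hy hxy hle hxt => ?_⟩
  · calc #(s \ t) = #(s.map κ \ U) := by rw [← hsU, card_map]
      _ = #U := by rw [card_sdiff_upperHalf hκ, card_upperHalf hκ]
      _ = #t := by rw [← hU, card_map]
  · rw [hprefix, hprefix, hsU, hU]
    refine card_filter_sdiff_upperHalf_le Prod.Lex.monotone_fst_ofLex hκ ?_ _ ?_
    · simp only [mem_map]
      rintro _ ⟨x, hx, rfl⟩
      have hfiber : (s.map κ).filter (fun y => (ofLex y).1 = (ofLex (κ x)).1) =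
          (s.filter (h · = h x)).map κ := by
        rw [filter_map]
        rfl
      rw [hfiber, card_map]
      have := hfib x hx
      omega
    · simp only [mem_map]
      rintro _ ⟨x, -, rfl⟩ _ ⟨y, -, rfl⟩ hxy hxj
      exact (hh.reflect_lt hxy).trans hxj
  · refine mem_filter.2 ⟨hy, mem_upperHalf_of_le (mem_filter.1 hxt).2 (mem_map_of_mem κ hy) ?_⟩
    exact Prod.Lex.toLex_le_toLex.2 (Or.inr ⟨hxy, hle⟩)

end Ballot

section Columns

variable {n : ℕ} {P Q : ℕ → ℕ}

lemma IsYoung.antitone (hP : IsYoung n P) : Antitone P := antitone_nat_of_succ_le hP.1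

lemma colH_le (n : ℕ) (P : ℕ → ℕ) (j : ℕ) : colH n P j ≤ n :=
  (card_filter_le _ _).trans (card_range n).le

lemma colH_antitone (n : ℕ) (P : ℕ → ℕ) : Antitone (colH n P) :=
  fun _ _ hjk => card_le_card (monotone_filter_right _ fun _ _ hi => hjk.trans_lt hi)

lemma lt_colH_iff (hP : IsYoung n P) {i j : ℕ} : i < colH n P j ↔ j < P i := by
  constructor
  · intro hi
    by_contra! hPi
    have hsub : (range n).filter (j < P ·) ⊆ range i := fun k hk =>
      mem_range.2 (lt_of_not_ge fun hik => ((hP.antitone hik).trans hPi).not_gt (mem_filter.1 hk).2)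
    exact (card_le_card hsub).not_gt (by simpa [colH] using hi)
  · intro hj
    have hin : i < n := by
      by_contra! hni
      rw [hP.2 i hni] at hj
      exact Nat.not_lt_zero j hj
    have hsub : range (i + 1) ⊆ (range n).filter (j < P ·) := fun k hk => by
      rw [mem_range] at hk
      exact mem_filter.2 ⟨mem_range.2 (by omega), hj.trans_le (hP.antitone (by omega))⟩
    unfold colH
    simpa using card_le_card hsub

lemma colH_le_iff (hP : IsYoung n P) {i j : ℕ} : colH n P j ≤ i ↔ P i ≤ j := by
  simpa only [not_lt] using (lt_colH_iff hP).not

lemma sum_rows_eq_sum_cols (hP : IsYoung n P) (hQ : IsYoung n Q) (R : ℕ → ℕ → Prop)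
    [∀ i c, Decidable (R i c)] (j : ℕ) :
    ∑ i ∈ range n, #((Ico (Q i) (min j (P i))).filter (R i)) =
      ∑ c ∈ range j, #((Ico (colH n Q c) (colH n P c)).filter (R · c)) := by
  simp only [card_filter]
  refine sum_comm' fun i c => ?_
  simp only [mem_range, mem_Ico, lt_min_iff, lt_colH_iff hP, colH_le_iff hQ]
  have : c < P i → i < n := fun hc => by
    by_contra! hi
    rw [hP.2 i hi] at hc
    exact Nat.not_lt_zero c hc
  tauto

lemma cntCols_eq_sum (hP : IsYoung n P) (hQ : IsYoung n Q) (T : ℕ → ℕ → ℕ) (s j : ℕ) :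
    cntCols n P Q T s j =
      ∑ c ∈ range j, #((Ico (colH n Q c) (colH n P c)).filter (T · c = s)) :=
  sum_rows_eq_sum_cols hP hQ (fun i c => T i c = s) j

lemma cntAll_eq_cntCols (hP : IsYoung n P) (T : ℕ → ℕ → ℕ) (s : ℕ) :
    cntAll n P Q T s = cntCols n P Q T s (P 0) :=
  sum_congr rfl fun i _ => by rw [min_eq_right (hP.antitone (Nat.zero_le i))]

lemma skewSize_eq_sum (hP : IsYoung n P) (hQ : IsYoung n Q) :
    skewSize n P Q = ∑ c ∈ range (P 0), (colH n P c - colH n Q c) := by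
  have := sum_rows_eq_sum_cols hP hQ (fun _ _ => True) (P 0)
  simp only [filter_true, Nat.card_Ico] at this
  rw [skewSize, ← this]
  exact sum_congr rfl fun i _ => by rw [min_eq_right (hP.antitone (Nat.zero_le i))]

end Columns

section ThicknessTwo

variable {n : ℕ} {P Q : ℕ → ℕ}

def singleCols (n : ℕ) (P Q : ℕ → ℕ) : Finset ℕ :=
  (range (P 0)).filter fun c => colH n P c = colH n Q c + 1

def doubleCols (n : ℕ) (P Q : ℕ → ℕ) : Finset ℕ :=
  (range (P 0)).filter fun c => colH n P c = colH n Q c + 2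

lemma mem_singleCols (hP : IsYoung n P) {c : ℕ} :
    c ∈ singleCols n P Q ↔ colH n P c = colH n Q c + 1 := by
  simp only [singleCols, mem_filter, mem_range, and_iff_right_iff_imp]
  intro hc
  exact (lt_colH_iff hP).1 (by omega)

lemma mem_doubleCols (hP : IsYoung n P) {c : ℕ} :
    c ∈ doubleCols n P Q ↔ colH n P c = colH n Q c + 2 := by
  simp only [doubleCols, mem_filter, mem_range, and_iff_right_iff_imp]
  intro hc
  exact (lt_colH_iff hP).1 (by omega)

lemma skewSize_eq (hP : IsYoung n P) (hQ : IsYoung n Q) (hth : ThickLE n P Q 2) :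
    skewSize n P Q = 2 * #(doubleCols n P Q) + #(singleCols n P Q) := by
  rw [skewSize_eq_sum hP hQ, doubleCols, singleCols, card_filter, card_filter, mul_sum,
    ← sum_add_distrib]
  refine sum_congr rfl fun c _ => ?_
  have := hth c
  split_ifs <;> omega

lemma bridge_eq_card_filter {i : ℕ} (hi : 1 ≤ i) :
    bridge n P Q i = #((singleCols n P Q).filter (colH n P · = i)) := by
  rw [bridge, singleCols, filter_filter]
  exact congrArg card (filter_congr fun c _ => by omega)

lemma sum_bridge_eq_card_singleCols :
    ∑ i ∈ Icc 1 n, bridge n P Q i = #(singleCols n P Q) := by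
  rw [card_eq_sum_card_fiberwise (f := colH n P) (t := Icc 1 n) fun c hc => ?_]
  · exact sum_congr rfl fun i hi => bridge_eq_card_filter (mem_Icc.1 hi).1
  · have := (mem_filter.1 hc).2
    have := colH_le n P c
    simp only [coe_Icc, Set.mem_Icc]
    omega

end ThicknessTwo

section Fillings

variable {n : ℕ} {P Q : ℕ → ℕ} {T : ℕ → ℕ → ℕ}

lemma thickLE_two_of_semistd (hP : IsYoung n P) (hQ : IsYoung n Q) (hT : SkewSemistd P Q T)
    (hA : InAlpha P Q T 1 2) : ThickLE n P Q 2 := by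
  intro c
  by_contra! hc
  set a := colH n Q c
  have box : ∀ k ≤ 2, Q (a + k) ≤ c ∧ c < P (a + k) := fun k hk =>
    ⟨(colH_le_iff hQ).1 (by omega), (lt_colH_iff hP).1 (by omega)⟩
  have h01 := hT.2 a c (box 0 (by omega)).1 (box 1 (by omega)).2
  have h12 : T (a + 1) c < T (a + 2) c := hT.2 (a + 1) c (box 1 (by omega)).1 (box 2 (by omega)).2
  have h0 := hA a c (box 0 (by omega)).1 (box 0 (by omega)).2
  have h2 := hA (a + 2) c (box 2 (by omega)).1 (box 2 (by omega)).2
  omega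

lemma SkewSemistd.row_mono (hT : SkewSemistd P Q T) {i x y : ℕ} (hx : Q i ≤ x) (hxy : x ≤ y)
    (hy : y < P i) : T i x ≤ T i y := by
  induction y, hxy using Nat.le_induction with
  | base => rfl
  | succ y hxy ih => exact (ih (by omega)).trans (hT.1 i y (hx.trans hxy) hy)

/-- A column of two boxes reads `1, 2` from top to bottom. -/
lemma card_filter_column_eq (hP : IsYoung n P) (hQ : IsYoung n Q) (hth : ThickLE n P Q 2)
    (hT : SkewSemistd P Q T) (hA : InAlpha P Q T 1 2) {s : ℕ} (hs : s = 1 ∨ s = 2) (c : ℕ) :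
    #((Ico (colH n Q c) (colH n P c)).filter (T · c = s)) =
      (if c ∈ doubleCols n P Q then 1 else 0) +
        (if c ∈ singleCols n P Q ∧ T (colH n Q c) c = s then 1 else 0) := by
  simp only [mem_doubleCols hP, mem_singleCols hP]
  generalize ha : colH n Q c = a
  have box : ∀ k, a + k < colH n P c → Q (a + k) ≤ c ∧ c < P (a + k) := fun k hk =>
    ⟨(colH_le_iff hQ).1 (by omega), (lt_colH_iff hP).1 hk⟩
  obtain h | h | h : colH n P c ≤ a ∨ colH n P c = a + 1 ∨ colH n P c = a + 2 := by
    have := hth c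
    omega
  · rw [Ico_eq_empty_of_le h, filter_empty, card_empty, if_neg (by omega), if_neg (by omega)]
  · rw [h, Nat.Ico_succ_singleton, filter_singleton]
    by_cases hTa : T a c = s <;> simp [hTa]
  · have h01 := hT.2 a c (box 0 (by omega)).1 (box 1 (by omega)).2
    have h0 := hA a c (box 0 (by omega)).1 (box 0 (by omega)).2
    have h1 := hA (a + 1) c (box 1 (by omega)).1 (box 1 (by omega)).2
    have e0 : T a c = 1 := by omega
    have e1 : T (a + 1) c = 2 := by omega
    have hIco : Ico a (a + 2) = {a, a + 1} := by
      ext x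
      simp only [mem_Ico, mem_insert, mem_singleton]
      omega
    rw [h, hIco, filter_insert, filter_singleton, e0, e1]
    rcases hs with rfl | rfl <;> simp

lemma cntCols_eq (hP : IsYoung n P) (hQ : IsYoung n Q) (hth : ThickLE n P Q 2)
    (hT : SkewSemistd P Q T) (hA : InAlpha P Q T 1 2) {s : ℕ} (hs : s = 1 ∨ s = 2) (j : ℕ) :
    cntCols n P Q T s j = #((doubleCols n P Q).filter (· < j)) +
      #(((singleCols n P Q).filter fun c => T (colH n Q c) c = s).filter (· < j)) := by
  rw [cntCols_eq_sum hP hQ]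
  simp only [card_filter_column_eq hP hQ hth hT hA hs, sum_add_distrib, ← card_filter]
  congr 2 <;> ext c <;> simp only [mem_filter, mem_range] <;> tauto

end Fillings

section SingleEntries

variable {n : ℕ} {P Q : ℕ → ℕ} {T : ℕ → ℕ → ℕ}

def twoSingles (n : ℕ) (P Q : ℕ → ℕ) (T : ℕ → ℕ → ℕ) : Finset ℕ :=
  (singleCols n P Q).filter fun c => T (colH n Q c) c = 2

lemma top_mem_of_mem_singleCols (hP : IsYoung n P) (hQ : IsYoung n Q) {c : ℕ}
    (hc : c ∈ singleCols n P Q) : Q (colH n Q c) ≤ c ∧ c < P (colH n Q c) :=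
  ⟨(colH_le_iff hQ).1 le_rfl, (lt_colH_iff hP).1 (by rw [(mem_singleCols hP).1 hc]; omega)⟩

lemma balanced_codom_iff_isBallot (hP : IsYoung n P) (hQ : IsYoung n Q) (hth : ThickLE n P Q 2)
    (hT : SkewSemistd P Q T) (hA : InAlpha P Q T 1 2) :
    cntAll n P Q T 1 = cntAll n P Q T 2 ∧ Codom n P Q T 1 ↔
      IsBallot (singleCols n P Q) (twoSingles n P Q T) := by
  have hones : singleCols n P Q \ twoSingles n P Q T =
      (singleCols n P Q).filter fun c => T (colH n Q c) c = 1 := by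
    ext c
    simp only [twoSingles, mem_sdiff, mem_filter, not_and]
    constructor
    · rintro ⟨hc, hc2⟩
      have := hA _ c (top_mem_of_mem_singleCols hP hQ hc).1 (top_mem_of_mem_singleCols hP hQ hc).2
      have := hc2 hc
      exact ⟨hc, by omega⟩
    · rintro ⟨hc, hc1⟩
      exact ⟨hc, fun _ => by omega⟩
  have hall : ∀ u ⊆ singleCols n P Q, u.filter (· < P 0) = u := fun u hu =>
    filter_true_of_mem fun c hc => mem_range.1 (mem_filter.1 (hu hc)).1
  simp only [IsBallot, Codom, cntAll_eq_cntCols hP, hones,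
    cntCols_eq hP hQ hth hT hA (Or.inl rfl), cntCols_eq hP hQ hth hT hA (Or.inr rfl)]
  rw [hall _ (filter_subset _ _), hall _ (filter_subset _ _)]
  simp only [twoSingles, add_le_add_iff_left, add_right_inj]

lemma twoSingles_upward (hP : IsYoung n P) (hQ : IsYoung n Q) (hT : SkewSemistd P Q T)
    (hA : InAlpha P Q T 1 2) :
    ∀ x ∈ singleCols n P Q, ∀ y ∈ singleCols n P Q, colH n P x = colH n P y → x ≤ y →
      x ∈ twoSingles n P Q T → y ∈ twoSingles n P Q T := by
  intro x hx y hy hxy hle hxt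
  have hq : colH n Q x = colH n Q y := by
    have := (mem_singleCols hP).1 hx
    have := (mem_singleCols hP).1 hy
    omega
  have hrow := hT.row_mono (top_mem_of_mem_singleCols hP hQ hx).1 hle
    (hq ▸ (top_mem_of_mem_singleCols hP hQ hy).2)
  have := hA _ y (top_mem_of_mem_singleCols hP hQ hy).1 (top_mem_of_mem_singleCols hP hQ hy).2
  have := (mem_filter.1 hxt).2
  exact mem_filter.2 ⟨hy, by rw [← hq] at *; omega⟩

def fillingOf (n : ℕ) (P Q : ℕ → ℕ) (t : Finset ℕ) : ℕ → ℕ → ℕ := fun i c =>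
  if colH n P c = colH n Q c + 2 ∧ i = colH n Q c ∨ colH n P c = colH n Q c + 1 ∧ c ∉ t then 1
  else 2

variable {t : Finset ℕ}

lemma inAlpha_fillOf : InAlpha P Q (fillingOf n P Q t) 1 2 := fun i c _ _ => by
  unfold fillingOf
  split_ifs <;> omega

lemma skewSemistd_fillOf (hP : IsYoung n P) (hQ : IsYoung n Q) (hth : ThickLE n P Q 2)
    (ht : ∀ x ∈ singleCols n P Q, ∀ y ∈ singleCols n P Q, colH n P x = colH n P y → x ≤ y →
      x ∈ t → y ∈ t) :
    SkewSemistd P Q (fillingOf n P Q t) := by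
  constructor
  · intro i j hQj hPj
    have hq := (colH_le_iff hQ).2 hQj
    have hp : i < colH n P j := (lt_colH_iff hP).2 (by omega)
    have hp' : i < colH n P (j + 1) := (lt_colH_iff hP).2 hPj
    have hq' : colH n Q (j + 1) ≤ i := (colH_le_iff hQ).2 (by omega)
    have := colH_antitone n P (Nat.le_add_right j 1)
    have := colH_antitone n Q (Nat.le_add_right j 1)
    have := hth j
    unfold fillingOf
    by_cases hj : colH n P j = colH n Q j + 2 ∧ i = colH n Q j ∨
        colH n P j = colH n Q j + 1 ∧ j ∉ t
    · rw [if_pos hj]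
      split_ifs <;> omega
    rw [if_neg hj, if_neg]
    rintro (hj' | ⟨hj', hjt⟩)
    · exact hj (Or.inl ⟨by omega, by omega⟩)
    by_cases hd : colH n P j = colH n Q j + 2
    · exact hj (Or.inl ⟨hd, by omega⟩)
    refine hj (Or.inr ⟨by omega, fun hjt' => hjt ?_⟩)
    exact ht j ((mem_singleCols hP).2 (by omega)) (j + 1) ((mem_singleCols hP).2 hj') (by omega)
      j.le_succ hjt'
  · intro i j hQj hPj
    have hq := (colH_le_iff hQ).2 hQj
    have hp : i + 1 < colH n P j := (lt_colH_iff hP).2 hPj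
    have := hth j
    unfold fillingOf
    rw [if_pos (Or.inl ⟨by omega, by omega⟩), if_neg (by omega)]
    omega

lemma twoSingles_fillOf (hP : IsYoung n P) (hts : t ⊆ singleCols n P Q) :
    twoSingles n P Q (fillingOf n P Q t) = t := by
  ext c
  simp only [twoSingles, fillingOf, mem_filter]
  constructor
  · rintro ⟨hc, hc2⟩
    by_contra hct
    rw [if_pos (Or.inr ⟨(mem_singleCols hP).1 hc, hct⟩)] at hc2
    omega
  · intro hct
    have := (mem_singleCols hP).1 (hts hct)
    exact ⟨hts hct, if_neg fun h => h.elim (by omega) fun h' => h'.2 hct⟩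

end SingleEntries

theorem stmt_7_general (n : ℕ) (P Q : ℕ → ℕ) (hP : IsYoung n P) (hQ : IsYoung n Q) :
    (∃ T : ℕ → ℕ → ℕ, SkewSemistd P Q T ∧ InAlpha P Q T 1 2 ∧
        cntAll n P Q T 1 = cntAll n P Q T 2 ∧ Codom n P Q T 1) ↔
    (Even (skewSize n P Q) ∧ ThickLE n P Q 2 ∧
      ∀ i, 1 ≤ i → i ≤ n → 2 * bridge n P Q i ≤ ∑ j ∈ Finset.Icc 1 n, bridge n P Q j) := by
  rw [sum_bridge_eq_card_singleCols]
  constructor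
  · rintro ⟨T, hT, hA, hbal, hcod⟩
    have hth := thickLE_two_of_semistd hP hQ hT hA
    have hball := (balanced_codom_iff_isBallot hP hQ hth hT hA).1 ⟨hbal, hcod⟩
    have hts : twoSingles n P Q T ⊆ singleCols n P Q := filter_subset _ _
    refine ⟨?_, hth, fun i hi _ => ?_⟩
    · rw [skewSize_eq hP hQ hth]
      exact (even_two_mul _).add (hball.even_card hts)
    · rw [bridge_eq_card_filter hi]
      exact hball.two_mul_card_le hts (filter_subset _ _) fun x hx y hy hle =>
        twoSingles_upward hP hQ hT hA x (mem_filter.1 hx).1 y (mem_filter.1 hy).1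
          ((mem_filter.1 hx).2.trans (mem_filter.1 hy).2.symm) hle
  · rintro ⟨heven, hth, hbr⟩
    rw [skewSize_eq hP hQ hth, Nat.even_add] at heven
    obtain ⟨t, hts, hball, hup⟩ := exists_isBallot (colH_antitone n P)
      (heven.1 (even_two_mul _)) fun c hc => by
        have := (mem_singleCols hP).1 hc
        rw [← bridge_eq_card_filter (by omega)]
        exact hbr _ (by omega) (colH_le n P c)
    have hT := skewSemistd_fillOf hP hQ hth hup
    refine ⟨fillingOf n P Q t, hT, inAlpha_fillOf, ?_⟩
    rw [balanced_codom_iff_isBallot hP hQ hth hT inAlpha_fillOf, twoSingles_fillOf hP hts]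
    exact hball

/-- A skew diagram `P/Q` admits a balanced, `α₁`-codominant, semistandard
`{1,2}`-filling if and only if its number of boxes is even, it has thickness at most
`2`, and no single bridge contains a majority of all bridge boxes. -/
theorem stmt_7 (n : ℕ) (P Q : ℕ → ℕ) (hP : IsYoung n P) (hQ : IsYoung n Q)
    (hQP : ∀ i, Q i ≤ P i) :
    (∃ T : ℕ → ℕ → ℕ, SkewSemistd P Q T ∧ InAlpha P Q T 1 2 ∧
        cntAll n P Q T 1 = cntAll n P Q T 2 ∧ Codom n P Q T 1) ↔
    (Even (skewSize n P Q) ∧ ThickLE n P Q 2 ∧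
      ∀ i, 1 ≤ i → i ≤ n → 2 * bridge n P Q i ≤ ∑ j ∈ Finset.Icc 1 n, bridge n P Q j) :=
  stmt_7_general n P Q hP hQ
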